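/- Let x_p, x_q ∈ ℝ^{2n}, F = e_n ⊗ I₂, Q = I_{2n} − F(FᵀF)⁻¹Fᵀ, R(θ) = I_n ⊗ r(θ). Define J₁*(θ) = ½‖x_q − R(θ)x_p‖²_Q := ½(x_q − R(θ)x_p)ᵀ Q (x_q − R(θ)x_p). Then J₁*(θ) = α cos θ + β sin θ + γ, where α = −x_qᵀ(I_n ⊗ I₂)Q x_p, β = −x_qᵀ(I_n ⊗ J)Q x_p with J = [[0,−1],[1,0]], and γ = ½(x_pᵀQx_p + x_qᵀQx_q). -/

import Mathlib

open Matrix Real Kronecker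

noncomputable def rot (θ : ℝ) : Matrix (Fin 2) (Fin 2) ℝ :=
  !![Real.cos θ, -Real.sin θ; Real.sin θ, Real.cos θ]

noncomputable def Fmat (n : ℕ) : Matrix (Fin n × Fin 2) (Fin 1 × Fin 2) ℝ :=
  (Matrix.of fun (_ : Fin n) (_ : Fin 1) => (1 : ℝ)) ⊗ₖ (1 : Matrix (Fin 2) (Fin 2) ℝ)

noncomputable def Qmat (n : ℕ) : Matrix (Fin n × Fin 2) (Fin n × Fin 2) ℝ :=
  1 - Fmat n * ((Fmat n)ᵀ * Fmat n)⁻¹ * (Fmat n)ᵀ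

noncomputable def Rblk (m : ℕ) (θ : ℝ) : Matrix (Fin m × Fin 2) (Fin m × Fin 2) ℝ :=
  (1 : Matrix (Fin m) (Fin m) ℝ) ⊗ₖ rot θ

noncomputable def Jmat : Matrix (Fin 2) (Fin 2) ℝ := !![0, -1; 1, 0]

/-! The projection `F (FᵀF)⁻¹ Fᵀ` with `F = 𝟙 ⊗ I₂` is `(n⁻¹ 𝟙𝟙ᵀ) ⊗ I₂`, so `Q` acts only on the
block index and commutes with every `I_n ⊗ A`. Since `R(θ) = I_n ⊗ r(θ) = cos θ I + sin θ (I_n ⊗ J)`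
is orthogonal, `RᵀQR = Q`; expanding the symmetric quadratic form `(x_q - R x_p)ᵀ Q (x_q - R x_p)`
then leaves the constant `γ` and the cross term `-x_qᵀ Q R x_p`, which is linear in `cos θ, sin θ`. -/

namespace Matrix

variable {ι m k l 𝕜 : Type*} [Fintype ι] [Fintype m] [Fintype k] [Fintype l] [Field 𝕜]

theorem isSymm_one_sub_mul_inv_mul_transpose [DecidableEq ι] [DecidableEq k]
    (F : Matrix ι k 𝕜) :
    (1 - F * (Fᵀ * F)⁻¹ * Fᵀ).IsSymm := by
  rw [IsSymm, transpose_sub, transpose_one, transpose_mul, transpose_mul, transpose_transpose,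
    transpose_nonsing_inv, transpose_mul, transpose_transpose, Matrix.mul_assoc]

-- No invertibility is needed: `inv_kronecker` holds with Mathlib's junk inverse too, so this
-- also covers `n = 0`, where `Fᵀ F = 0`.
theorem kronecker_one_mul_inv_mul_transpose [DecidableEq m] [DecidableEq k] [DecidableEq l]
    (B : Matrix m k 𝕜) :
    let F := B ⊗ₖ (1 : Matrix l l 𝕜)
    F * (Fᵀ * F)⁻¹ * Fᵀ = (B * (Bᵀ * B)⁻¹ * Bᵀ) ⊗ₖ (1 : Matrix l l 𝕜) := by
  simp only [← kroneckerMap_transpose, transpose_one, ← mul_kronecker_mul, inv_kronecker, inv_one,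
    Matrix.mul_one]

theorem commute_kronecker_one_one_kronecker [DecidableEq m] [DecidableEq l]
    (A : Matrix m m 𝕜) (B : Matrix l l 𝕜) :
    Commute (A ⊗ₖ (1 : Matrix l l 𝕜)) ((1 : Matrix m m 𝕜) ⊗ₖ B) := by
  rw [Commute, SemiconjBy, ← mul_kronecker_mul, ← mul_kronecker_mul, Matrix.mul_one,
    Matrix.one_mul, Matrix.mul_one, Matrix.one_mul]

theorem dotProduct_sub_mulVec_sub {Q : Matrix ι ι 𝕜} (hQ : Q.IsSymm) (y z : ι → 𝕜) :
    (y - z) ⬝ᵥ Q *ᵥ (y - z) = y ⬝ᵥ Q *ᵥ y - 2 * (y ⬝ᵥ Q *ᵥ z) + z ⬝ᵥ Q *ᵥ z := by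
  have hsymm : z ⬝ᵥ Q *ᵥ y = y ⬝ᵥ Q *ᵥ z := by
    rw [dotProduct_mulVec, ← mulVec_transpose, hQ.eq, dotProduct_comm]
  rw [mulVec_sub, sub_dotProduct, dotProduct_sub, dotProduct_sub, hsymm]
  ring

theorem mulVec_dotProduct_mulVec_mulVec (R Q : Matrix ι ι 𝕜) (x : ι → 𝕜) :
    R *ᵥ x ⬝ᵥ Q *ᵥ R *ᵥ x = x ⬝ᵥ (Rᵀ * Q * R) *ᵥ x := by
  rw [mulVec_mulVec, ← vecMul_transpose, ← dotProduct_mulVec, mulVec_mulVec, Matrix.mul_assoc]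

theorem transpose_mul_mul_self_of_commute [DecidableEq ι] {R Q : Matrix ι ι 𝕜} (hR : Rᵀ * R = 1)
    (hQR : Commute Q R) : Rᵀ * Q * R = Q := by
  rw [Matrix.mul_assoc, hQR.eq, ← Matrix.mul_assoc, hR, Matrix.one_mul]

end Matrix

theorem rot_eq (θ : ℝ) : rot θ = Real.cos θ • 1 + Real.sin θ • Jmat := by
  ext i j
  fin_cases i <;> fin_cases j <;> simp [rot, Jmat]

theorem rot_transpose_mul_self (θ : ℝ) : (rot θ)ᵀ * rot θ = 1 := by
  ext i j
  fin_cases i <;> fin_cases j <;> simp [rot, Matrix.mul_apply, ← sq, mul_comm]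

theorem Rblk_eq (m : ℕ) (θ : ℝ) :
    Rblk m θ = Real.cos θ • 1 + Real.sin θ • ((1 : Matrix (Fin m) (Fin m) ℝ) ⊗ₖ Jmat) := by
  rw [Rblk, rot_eq, kronecker_add, kronecker_smul, kronecker_smul, one_kronecker_one]

theorem Rblk_transpose_mul_self (m : ℕ) (θ : ℝ) : (Rblk m θ)ᵀ * Rblk m θ = 1 := by
  rw [Rblk, ← kroneckerMap_transpose, transpose_one, ← mul_kronecker_mul, Matrix.one_mul,
    rot_transpose_mul_self, one_kronecker_one]

theorem isSymm_Qmat (n : ℕ) : (Qmat n).IsSymm :=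
  isSymm_one_sub_mul_inv_mul_transpose (Fmat n)

theorem commute_Qmat_one_kronecker (n : ℕ) (A : Matrix (Fin 2) (Fin 2) ℝ) :
    Commute (Qmat n) ((1 : Matrix (Fin n) (Fin n) ℝ) ⊗ₖ A) := by
  rw [Qmat, Fmat, kronecker_one_mul_inv_mul_transpose]
  exact (Commute.one_left _).sub_left (commute_kronecker_one_one_kronecker _ _)

theorem J1star_sinusoidal_general (n : ℕ) (θ : ℝ) (xp xq : Fin n × Fin 2 → ℝ)
    (α β γ : ℝ)
    (hα : α = -(xq ⬝ᵥ (((1 : Matrix (Fin n) (Fin n) ℝ) ⊗ₖ (1 : Matrix (Fin 2) (Fin 2) ℝ)) * Qmat n).mulVec xp))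
    (hβ : β = -(xq ⬝ᵥ (((1 : Matrix (Fin n) (Fin n) ℝ) ⊗ₖ Jmat) * Qmat n).mulVec xp))
    (hγ : γ = (1 / 2) * (xp ⬝ᵥ (Qmat n).mulVec xp + xq ⬝ᵥ (Qmat n).mulVec xq)) :
    (1 / 2) * ((xq - (Rblk n θ).mulVec xp) ⬝ᵥ (Qmat n).mulVec (xq - (Rblk n θ).mulVec xp))
      = α * Real.cos θ + β * Real.sin θ + γ := by
  have hQR : (Rblk n θ)ᵀ * Qmat n * Rblk n θ = Qmat n :=
    transpose_mul_mul_self_of_commute (Rblk_transpose_mul_self n θ)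
      (commute_Qmat_one_kronecker n (rot θ))
  have hcross : xq ⬝ᵥ Qmat n *ᵥ Rblk n θ *ᵥ xp = Real.cos θ * (xq ⬝ᵥ Qmat n *ᵥ xp)
      + Real.sin θ * (xq ⬝ᵥ (((1 : Matrix (Fin n) (Fin n) ℝ) ⊗ₖ Jmat) * Qmat n) *ᵥ xp) := by
    rw [← (commute_Qmat_one_kronecker n Jmat).eq, mulVec_mulVec, Rblk_eq, Matrix.mul_add,
      Matrix.mul_smul, Matrix.mul_smul, Matrix.mul_one, add_mulVec, smul_mulVec, smul_mulVec,
      dotProduct_add, dotProduct_smul, dotProduct_smul, smul_eq_mul, smul_eq_mul]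
  rw [dotProduct_sub_mulVec_sub (isSymm_Qmat n), mulVec_dotProduct_mulVec_mulVec, hQR, hcross,
    hα, hβ, hγ, one_kronecker_one, Matrix.one_mul]
  ring

theorem J1star_sinusoidal (n : ℕ) (hn : 1 ≤ n) (θ : ℝ) (xp xq : Fin n × Fin 2 → ℝ)
    (α β γ : ℝ)
    (hα : α = -(xq ⬝ᵥ (((1 : Matrix (Fin n) (Fin n) ℝ) ⊗ₖ (1 : Matrix (Fin 2) (Fin 2) ℝ)) * Qmat n).mulVec xp))
    (hβ : β = -(xq ⬝ᵥ (((1 : Matrix (Fin n) (Fin n) ℝ) ⊗ₖ Jmat) * Qmat n).mulVec xp))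
    (hγ : γ = (1 / 2) * (xp ⬝ᵥ (Qmat n).mulVec xp + xq ⬝ᵥ (Qmat n).mulVec xq)) :
    (1 / 2) * ((xq - (Rblk n θ).mulVec xp) ⬝ᵥ (Qmat n).mulVec (xq - (Rblk n θ).mulVec xp))
      = α * Real.cos θ + β * Real.sin θ + γ :=
  J1star_sinusoidal_general n θ xp xq α β γ hα hβ hγ
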